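/- Every static solution W with W' → 0 fast enough at ±∞ satisfies ∫_{-∞}^{∞} tanh r · sech²r · (1 − W(r)²)² dr = 0. -/

import Mathlib

/-! The weighted identity is the energy identity obtained by multiplying the equation
`W'' + k sech²r · W (1 − W²) = 0` by `W'`: the energy `W'²/2 − k (1 − W²)² / (4 cosh²r)`
has derivative `(k/2) tanh r sech²r (1 − W²)²`, and it tends to `0` at `±∞` because `W' → 0`
there while `W` stays bounded and `cosh r → ∞`. -/

open Filter MeasureTheory Real

namespace Real

theorem tendsto_cosh_atTop : Tendsto cosh atTop atTop :=
  tendsto_atTop_mono (fun x => by rw [cosh_eq]; linarith [(exp_pos (-x)).le])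
    (tendsto_exp_atTop.atTop_div_const two_pos)

theorem tendsto_cosh_atBot : Tendsto cosh atBot atTop := by
  simpa [Function.comp_def] using tendsto_cosh_atTop.comp tendsto_neg_atBot_atTop

end Real

noncomputable def staticEnergy (k : ℝ) (W : ℝ → ℝ) (r : ℝ) : ℝ :=
  deriv W r ^ 2 / 2 - k * (1 - W r ^ 2) ^ 2 / (4 * cosh r ^ 2)

theorem hasDerivAt_staticEnergy {k : ℝ} {W : ℝ → ℝ} {r : ℝ}
    (hW : DifferentiableAt ℝ W r) (hW' : DifferentiableAt ℝ (deriv W) r)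
    (hODE : deriv (deriv W) r + k / cosh r ^ 2 * W r * (1 - W r ^ 2) = 0) :
    HasDerivAt (staticEnergy k W) (k / 2 * (tanh r / cosh r ^ 2 * (1 - W r ^ 2) ^ 2)) r := by
  have hpot : HasDerivAt (fun r => k * (1 - W r ^ 2) ^ 2)
      (k * (2 * (1 - W r ^ 2) * -(2 * W r * deriv W r))) r := by
    simpa using ((hasDerivAt_const r 1).sub (hW.hasDerivAt.pow 2)).pow 2 |>.const_mul k
  have hdenom : HasDerivAt (fun r => 4 * cosh r ^ 2) (4 * (2 * cosh r * sinh r)) r := by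
    simpa using ((hasDerivAt_cosh r).pow 2).const_mul 4
  have hkin := (hW'.hasDerivAt.pow 2).div_const 2
  refine (hkin.sub (hpot.div hdenom (by positivity))).congr_deriv ?_
  rw [eq_neg_of_add_eq_zero_left hODE, tanh_eq_sinh_div_cosh]
  field_simp
  ring

theorem tendsto_staticEnergy {k C : ℝ} {W : ℝ → ℝ} {l : Filter ℝ} (hC : ∀ r, |W r| ≤ C)
    (hW' : Tendsto (deriv W) l (nhds 0)) (hcosh : Tendsto cosh l atTop) :
    Tendsto (staticEnergy k W) l (nhds 0) := by
  have hkin : Tendsto (fun r => deriv W r ^ 2 / 2) l (nhds 0) := by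
    simpa using (hW'.pow 2).div_const 2
  have hdenom : Tendsto (fun r => (4 * cosh r ^ 2)⁻¹) l (nhds 0) :=
    (((tendsto_pow_atTop two_ne_zero).comp hcosh).const_mul_atTop four_pos).inv_tendsto_atTop
  have hbdd : IsBoundedUnder (· ≤ ·) l fun r => ‖k * (1 - W r ^ 2) ^ 2‖ := by
    refine isBoundedUnder_of ⟨|k| * (1 + C ^ 2) ^ 2, fun r => ?_⟩
    have hWr := abs_le.mp (hC r)
    have : |1 - W r ^ 2| ≤ 1 + C ^ 2 := abs_le.mpr ⟨by nlinarith, by nlinarith⟩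
    rw [norm_mul, norm_pow, Real.norm_eq_abs, Real.norm_eq_abs]
    gcongr
  have hpot := hdenom.zero_mul_isBoundedUnder_le hbdd
  refine (sub_zero (0 : ℝ) ▸ hkin.sub hpot).congr fun r => ?_
  simp only [staticEnergy]
  ring

theorem odd_weight_identity_general (ℓ : ℝ) (hℓ : 0 < ℓ) (W : ℝ → ℝ)
    (hW : ContDiff ℝ 2 W)
    (hODE : ∀ r : ℝ, deriv (deriv W) r
      + ℓ * (ℓ + 1) / (Real.cosh r) ^ 2 * W r * (1 - (W r) ^ 2) = 0)
    (hbdd : ∃ C : ℝ, ∀ r : ℝ, |W r| ≤ C)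
    (hint : Integrable (fun r : ℝ =>
      Real.tanh r / (Real.cosh r) ^ 2 * (1 - (W r) ^ 2) ^ 2))
    (hdecayTop : Tendsto (deriv W) atTop (nhds 0))
    (hdecayBot : Tendsto (deriv W) atBot (nhds 0)) :
    ∫ r : ℝ, Real.tanh r / (Real.cosh r) ^ 2 * (1 - (W r) ^ 2) ^ 2 = 0 := by
  obtain ⟨C, hC⟩ := hbdd
  have hW₁ : Differentiable ℝ W := hW.differentiable two_ne_zero
  have hW₂ : Differentiable ℝ (deriv W) := (hW.iterate_deriv' 1 1).differentiable one_ne_zero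
  have hFTC := integral_of_hasDerivAt_of_tendsto
    (fun r => hasDerivAt_staticEnergy (hW₁ r) (hW₂ r) (hODE r)) (hint.const_mul _)
    (tendsto_staticEnergy hC hdecayBot tendsto_cosh_atBot)
    (tendsto_staticEnergy hC hdecayTop tendsto_cosh_atTop)
  rw [integral_const_mul, sub_self] at hFTC
  exact (mul_eq_zero.mp hFTC).resolve_left (by positivity)

/-- Every static solution with `W' → 0` at `±∞` satisfies
`∫ tanh r · sech²r · (1 − W²)² dr = 0`. -/
theorem odd_weight_identity (ℓ : ℝ) (hℓ : 0 < ℓ) (W : ℝ → ℝ)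
    (hW : ContDiff ℝ 2 W)
    (hODE : ∀ r : ℝ, deriv (deriv W) r
      + ℓ * (ℓ + 1) / (Real.cosh r) ^ 2 * W r * (1 - (W r) ^ 2) = 0)
    (hbdd : ∃ C : ℝ, ∀ r : ℝ, |W r| ≤ C)
    (hW'sq : Integrable (fun r : ℝ => (deriv W r) ^ 2))
    (hint : Integrable (fun r : ℝ =>
      Real.tanh r / (Real.cosh r) ^ 2 * (1 - (W r) ^ 2) ^ 2))
    (hdecayTop : Tendsto (deriv W) atTop (nhds 0))
    (hdecayBot : Tendsto (deriv W) atBot (nhds 0)) :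
    ∫ r : ℝ, Real.tanh r / (Real.cosh r) ^ 2 * (1 - (W r) ^ 2) ^ 2 = 0 :=
  odd_weight_identity_general ℓ hℓ W hW hODE hbdd hint hdecayTop hdecayBot
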